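/- arXiv:2604.08486 — 9 statements merged into one kernel-verified Lean document; each statement's English description precedes it below -/
import Mathlib

section
/- Let V be a real vector space, f : V → V a linear endomorphism, and T : V → V → V → ℝ a trilinear form skew-symmetric in its first two arguments. Define K by 2·K(X,Y,Z) = T(X,Y,Z) − T(Z,X,f Y) + T(Y,Z,f X). Then K(X,Y,Z) = −K(X,Z,Y) holds for all X,Y,Z ∈ V if and only if T(X,Y,Z) − T(Z,X,Y) − T(Z,X,f Y) + T(X,Y,f Z) = 0 holds for all X,Y,Z ∈ V. -/
/-- Pointwise model: `K` is skew-symmetric in its last two arguments iff the torsion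
satisfies `T(X,Y,Z) − T(Z,X,Y) − T(Z,X,fY) + T(X,Y,fZ) = 0`. -/
theorem stmt_1 {V : Type*} [AddCommGroup V] [Module ℝ V]
    (f : V →ₗ[ℝ] V) (T : V →ₗ[ℝ] V →ₗ[ℝ] V →ₗ[ℝ] ℝ) (K : V → V → V → ℝ)
    (hskew : ∀ X Y Z : V, T X Y Z = - T Y X Z)
    (hK : ∀ X Y Z : V, 2 * K X Y Z = T X Y Z - T Z X (f Y) + T Y Z (f X)) :
    (∀ X Y Z : V, K X Y Z = - K X Z Y) ↔
      (∀ X Y Z : V, T X Y Z - T Z X Y - T Z X (f Y) + T X Y (f Z) = 0) := by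
  have key : ∀ X Y Z : V,
      2 * K X Y Z + 2 * K X Z Y
        = T X Y Z - T Z X Y - T Z X (f Y) + T X Y (f Z) := by
    intro X Y Z
    have h1 := hK X Y Z
    have h2 := hK X Z Y
    have hs1 := hskew X Z Y
    have hs2 := hskew Y X (f Z)
    have hs3 := hskew Z Y (f X)
    linarith
  constructor
  · intro h X Y Z
    have := key X Y Z
    have hh := h X Y Z
    linarith
  · intro h X Y Z
    have := key X Y Z
    have hh := h X Y Z
    linarith
end

section
/- Let V be a real vector space, f : V → V a linear endomorphism, and T : V → V → V → ℝ a trilinear form skew-symmetric in its first two arguments. Define K by 2·K(X,Y,Z) = T(X,Y,Z) − T(Z,X,f Y) + T(Y,Z,f X). Then K(X,Y,Z) = −K(Y,X,Z) holds for all X,Y,Z ∈ V if and only if T(Y,Z,f X) + T(X,Z,f Y) = 0 holds for all X,Y,Z ∈ V; moreover, in that case K(X,Y,Z) = (1/2)·T(X,Y,Z) for all X,Y,Z ∈ V. -/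
/-- Pointwise model of the characterization of special Einstein connections:
`K X Y Z = −K Y X Z` iff `T(Y,Z,fX) + T(X,Z,fY) = 0`; in that case `K = (1/2)T`. -/
theorem stmt_2 {V : Type*} [AddCommGroup V] [Module ℝ V]
    (f : V →ₗ[ℝ] V) (T : V →ₗ[ℝ] V →ₗ[ℝ] V →ₗ[ℝ] ℝ) (K : V → V → V → ℝ)
    (hskew : ∀ X Y Z : V, T X Y Z = - T Y X Z)
    (hK : ∀ X Y Z : V, 2 * K X Y Z = T X Y Z - T Z X (f Y) + T Y Z (f X)) :
    ((∀ X Y Z : V, K X Y Z = - K Y X Z) ↔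
      (∀ X Y Z : V, T Y Z (f X) + T X Z (f Y) = 0)) ∧
    ((∀ X Y Z : V, K X Y Z = - K Y X Z) →
      ∀ X Y Z : V, K X Y Z = (1 / 2) * T X Y Z) := by
  have key : ∀ X Y Z : V, 2 * (K X Y Z + K Y X Z)
      = 2 * (T Y Z (f X) + T X Z (f Y)) := by
    intro X Y Z
    have h1 := hK X Y Z
    have h2 := hK Y X Z
    have h3 := hskew X Y Z
    have h4 := hskew Z X (f Y)
    have h5 := hskew Z Y (f X)
    linarith
  have hiff : (∀ X Y Z : V, K X Y Z = - K Y X Z) ↔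
      (∀ X Y Z : V, T Y Z (f X) + T X Z (f Y) = 0) := by
    constructor
    · intro h X Y Z
      have := key X Y Z
      have h' := h X Y Z
      linarith
    · intro h X Y Z
      have := key X Y Z
      have h' := h X Y Z
      linarith
  refine ⟨hiff, fun h X Y Z => ?_⟩
  have h1 := hK X Y Z
  have h2 := hiff.mp h X Y Z
  have h4 := hskew Z X (f Y)
  linarith
end

section
/- Let V be a real vector space, f : V → V a linear endomorphism, and T : V → V → V → ℝ a trilinear form skew-symmetric in its first two arguments. Define K by 2·K(X,Y,Z) = T(X,Y,Z) − T(Z,X,f Y) + T(Y,Z,f X) and define dF'(X,Y,Z) = −T(X,Y,Z) − T(Y,Z,X) − T(Z,X,Y). Assume that T(X,Y,Z) − T(Z,X,Y) − T(Z,X,f Y) + T(X,Y,f Z) = 0 for all X,Y,Z ∈ V. Then K(X,Y,Z) = T(Z,Y,X) − (1/2)·dF'(X,Y,Z) for all X,Y,Z ∈ V; consequently, K is totally skew-symmetric (alternating in all three arguments) if and only if T is totally skew-symmetric. -/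
/-- Pointwise model: under the metric-compatibility condition on the torsion,
`K(X,Y,Z) = T(Z,Y,X) − (1/2)·dF'(X,Y,Z)`; consequently `K` is totally skew-symmetric
iff `T` is totally skew-symmetric. -/
theorem stmt_3 {V : Type*} [AddCommGroup V] [Module ℝ V]
    (f : V →ₗ[ℝ] V) (T : V →ₗ[ℝ] V →ₗ[ℝ] V →ₗ[ℝ] ℝ) (K dF' : V → V → V → ℝ)
    (hskew : ∀ X Y Z : V, T X Y Z = - T Y X Z)
    (hK : ∀ X Y Z : V, 2 * K X Y Z = T X Y Z - T Z X (f Y) + T Y Z (f X))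
    (hdF : ∀ X Y Z : V, dF' X Y Z = - T X Y Z - T Y Z X - T Z X Y)
    (hcond : ∀ X Y Z : V, T X Y Z - T Z X Y - T Z X (f Y) + T X Y (f Z) = 0) :
    (∀ X Y Z : V, K X Y Z = T Z Y X - (1 / 2) * dF' X Y Z) ∧
    (((∀ X Y Z : V, K X Y Z = - K Y X Z) ∧ (∀ X Y Z : V, K X Y Z = - K X Z Y)) ↔
      ((∀ X Y Z : V, T X Y Z = - T Y X Z) ∧ (∀ X Y Z : V, T X Y Z = - T X Z Y))) := by
  have main : ∀ X Y Z : V, K X Y Z = T Z Y X - (1 / 2) * dF' X Y Z := by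
    intro X Y Z
    have h1 := hcond X Y Z
    have h2 := hcond Y Z X
    have h3 := hskew Z Y X
    have h4 := hK X Y Z
    have h5 := hdF X Y Z
    linarith
  refine ⟨main, ?_, ?_⟩
  · rintro ⟨h1, _⟩
    refine ⟨hskew, ?_⟩
    -- first derive cyclic invariance: T Z X Y = T Y Z X
    have cyc : ∀ X Y Z : V, T Z X Y = T Y Z X := by
      intro X Y Z
      have e1 := main X Y Z
      have e2 := main Y X Z
      have e3 := hdF X Y Z
      have e4 := hdF Y X Z
      have s1 := hskew Y X Z
      have s2 := hskew Z Y X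
      have s3 := hskew Z X Y
      have s4 := hskew X Z Y
      have := h1 X Y Z
      linarith
    intro X Y Z
    have c := cyc Z Y X
    have s := hskew X Y Z
    linarith
  · rintro ⟨hs1, hs2⟩
    constructor <;> intro X Y Z
    · have e1 := main X Y Z
      have e2 := main Y X Z
      have e3 := hdF X Y Z
      have e4 := hdF Y X Z
      have s1 := hs1 Y X Z
      have s2 := hs1 Z Y X
      have s3 := hs1 Z X Y
      have s4 := hs2 X Y Z
      have s5 := hs2 Y Z X
      have s6 := hs2 Z Y X
      have s7 := hs2 Z X Y
      linarith
    · have e1 := main X Y Z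
      have e2 := main X Z Y
      have e3 := hdF X Y Z
      have e4 := hdF X Z Y
      have s1 := hs1 Z Y X
      have s2 := hs1 Y X Z
      have s3 := hs2 X Y Z
      have s4 := hs2 Y Z X
      have s5 := hs2 Z X Y
      have s6 := hs2 Z Y X
      have s7 := hs1 Y Z X
      linarith
end

section
/- Let V be a real vector space, g : V → V → ℝ a symmetric bilinear form, f : V → V a linear endomorphism skew-adjoint with respect to g (g(f X, Y) = −g(X, f Y)), and T : V → V → V → ℝ a trilinear form skew-symmetric in its first two arguments. Assume (i) T(X,Y,Z) − T(Z,X,Y) − T(Z,X,f Y) + T(X,Y,f Z) = 0 for all X,Y,Z, and (ii) T is totally skew-symmetric (alternating in all three arguments). Then T(f X, Y, Z) = T(X, f Y, Z) = T(X, Y, f Z) for all X,Y,Z ∈ V. -/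
/-- Pointwise model: a totally skew-symmetric torsion of a metric Einstein connection
satisfies `T(fX,Y,Z) = T(X,fY,Z) = T(X,Y,fZ)`. -/
theorem stmt_4 {V : Type*} [AddCommGroup V] [Module ℝ V]
    (g : V →ₗ[ℝ] V →ₗ[ℝ] ℝ) (f : V →ₗ[ℝ] V)
    (hgsymm : ∀ X Y : V, g X Y = g Y X)
    (hfskew : ∀ X Y : V, g (f X) Y = - g X (f Y))
    (T : V →ₗ[ℝ] V →ₗ[ℝ] V →ₗ[ℝ] ℝ)
    (hskew : ∀ X Y Z : V, T X Y Z = - T Y X Z)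
    (hcond : ∀ X Y Z : V, T X Y Z - T Z X Y - T Z X (f Y) + T X Y (f Z) = 0)
    (htotskew : ∀ X Y Z : V, T X Y Z = - T X Z Y) :
    ∀ X Y Z : V, T (f X) Y Z = T X (f Y) Z ∧ T X (f Y) Z = T X Y (f Z) := by
  have hcyc : ∀ A B C : V, T A B C = T C A B := by
    intro A B C
    have h1 := htotskew A B C
    have h2 := hskew A C B
    linarith
  have key : ∀ X Y Z : V, T X (f Y) Z = T X Y (f Z) := by
    intro X Y Z
    have h := hcond X Y Z
    have h1 := hcyc X Y Z
    have h2 := hcyc X (f Y) Z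
    linarith
  intro X Y Z
    
  refine ⟨?_, key X Y Z⟩
  have k := key Y Z X
  have a1 := hcyc (f X) Y Z
  have a2 := hcyc Z (f X) Y
  have a3 := hcyc X Y (f Z)
  have a4 := hcyc (f Z) X Y
  have a5 := key X Y Z
  linarith
end

section
/- Let V be a real vector space, f : V → V a linear endomorphism, and T : V → V → V → ℝ a trilinear form skew-symmetric in its first two arguments. Define K by 2·K(X,Y,Z) = T(X,Y,Z) − T(Z,X,f Y) + T(Y,Z,f X), define A(X,Y,Z) = (1/2)·[T(Z,X,Y) + T(Z,X,f Y) − T(X,Y,Z) − T(X,Y,f Z)], and define B(X,Y,Z) = −(1/2)·[T(X,Y,Z) + T(X,Y,f Z) + T(Z,X,Y) + T(Z,X,f Y)]. Then the following are equivalent: (i) K(X,Y,Z) = −K(X,Z,Y) for all X,Y,Z ∈ V; (ii) A(X,Y,Z) = 0 for all X,Y,Z ∈ V; (iii) B(X,Y,Z) = −B(Y,X,Z) for all X,Y,Z ∈ V. -/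
/-- Pointwise model of the lemma: equivalence of (i) `K(X,Y,Z) = −K(X,Z,Y)`,
(ii) `A = 0` (i.e. `∇g = 0`), (iii) `B(X,Y,Z) = −B(Y,X,Z)` (i.e.
`(∇_X F)(Y,Z) = −(∇_Y F)(X,Z)`). -/
theorem stmt_5 {V : Type*} [AddCommGroup V] [Module ℝ V]
    (f : V →ₗ[ℝ] V) (T : V →ₗ[ℝ] V →ₗ[ℝ] V →ₗ[ℝ] ℝ) (K A B : V → V → V → ℝ)
    (hskew : ∀ X Y Z : V, T X Y Z = - T Y X Z)
    (hK : ∀ X Y Z : V, 2 * K X Y Z = T X Y Z - T Z X (f Y) + T Y Z (f X))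
    (hA : ∀ X Y Z : V, A X Y Z =
      (1 / 2) * (T Z X Y + T Z X (f Y) - T X Y Z - T X Y (f Z)))
    (hB : ∀ X Y Z : V, B X Y Z =
      -(1 / 2) * (T X Y Z + T X Y (f Z) + T Z X Y + T Z X (f Y))) :
    ((∀ X Y Z : V, K X Y Z = - K X Z Y) ↔ (∀ X Y Z : V, A X Y Z = 0)) ∧
    ((∀ X Y Z : V, K X Y Z = - K X Z Y) ↔ (∀ X Y Z : V, B X Y Z = - B Y X Z)) := by
  have hAK : ∀ X Y Z : V, K X Y Z + K X Z Y = - A X Y Z := by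
    intro X Y Z
    have h1 := hK X Y Z
    have h2 := hK X Z Y
    have h3 := hA X Y Z
    have s1 := hskew Y Z (f X)
    have s2 := hskew Y X (f Z)
    have s3 := hskew Z X Y
    linarith
  have hBA : ∀ X Y Z : V, B X Y Z + B Y X Z = A Z X Y := by
    intro X Y Z
    have h1 := hB X Y Z
    have h2 := hB Y X Z
    have h3 := hA Z X Y
    have s1 := hskew X Y Z
    have s2 := hskew X Y (f Z)
    have s3 := hskew Z Y X
    have s4 := hskew Z Y (f X)
    linarith
  have hiff1 : (∀ X Y Z : V, K X Y Z = - K X Z Y) ↔ (∀ X Y Z : V, A X Y Z = 0) := by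
    constructor
    · intro h X Y Z
      have := hAK X Y Z
      have := h X Y Z
      linarith
    · intro h X Y Z
      have := hAK X Y Z
      have := h X Y Z
      linarith
  refine ⟨hiff1, hiff1.trans ?_⟩
  constructor
  · intro h X Y Z
    have := hBA X Y Z
    have := h Z X Y
    linarith
  · intro h X Y Z
    have := hBA Y Z X
    have := h Y Z X
    linarith
end

section
/- Let V be a real vector space, f : V → V a linear endomorphism, and T : V → V → V → ℝ a trilinear form skew-symmetric in its first two arguments. Define K by 2·K(X,Y,Z) = T(X,Y,Z) − T(Z,X,f Y) + T(Y,Z,f X) and B(X,Y,Z) = −(1/2)·[T(X,Y,Z) + T(X,Y,f Z) + T(Z,X,Y) + T(Z,X,f Y)]. Then for all X,Y,Z ∈ V: 2·[B(X,Y,Z) + K(X,Y,f Z) − K(X,Z,f Y)] = −T(Z,X,Y) − T(X,Y,Z) − T(f Z,X,f Y) − T(X,f Y,f Z) + T(Y,f Z,f X) + T(f Y,Z,f X). -/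
/-- Pointwise model expressing the Levi-Civita covariant derivative of the fundamental
2-form through the torsion of an Einstein connection. -/
theorem stmt_7 {V : Type*} [AddCommGroup V] [Module ℝ V]
    (f : V →ₗ[ℝ] V) (T : V →ₗ[ℝ] V →ₗ[ℝ] V →ₗ[ℝ] ℝ) (K B : V → V → V → ℝ)
    (hskew : ∀ X Y Z : V, T X Y Z = - T Y X Z)
    (hK : ∀ X Y Z : V, 2 * K X Y Z = T X Y Z - T Z X (f Y) + T Y Z (f X))
    (hB : ∀ X Y Z : V, B X Y Z =
      -(1 / 2) * (T X Y Z + T X Y (f Z) + T Z X Y + T Z X (f Y))) :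
    ∀ X Y Z : V, 2 * (B X Y Z + K X Y (f Z) - K X Z (f Y)) =
      - T Z X Y - T X Y Z - T (f Z) X (f Y) - T X (f Y) (f Z)
      + T Y (f Z) (f X) + T (f Y) Z (f X) := by
  intro X Y Z
  have h1 := hK X Y (f Z)
  have h2 := hK X Z (f Y)
  have h3 := hB X Y Z
  have s1 := hskew (f Z) X (f Y)
  have s2 := hskew (f Y) X (f Z)
  have s3 := hskew Z X Y
  have s4 := hskew X (f Y) (f Z)
  have s5 := hskew Y (f Z) (f X)
  have s6 := hskew Z (f Y) (f X)
  have s7 := hskew Z X (f Y)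
  linarith
end

section
/- Let V be a real vector space, f, Q : V → V linear endomorphisms with Q ∘ f = f ∘ Q, and T : V → V → V → ℝ a trilinear form skew-symmetric in its first two arguments. Define dF'(X,Y,Z) = −T(X,Y,Z) − T(Y,Z,X) − T(Z,X,Y) and 2·N(X,Y,Z) = −T(Z,X,Y) − T(X,Y,Z) − T(f Z,X,f Y) − T(X,f Y,f Z) + T(Y,f Z,f X) + T(f Y,Z,f X). Assume the Q-T-condition: T(Q X,Y,Z) = T(X,Q Y,Z) = T(X,Y,Q Z) for all X,Y,Z ∈ V. Then dF'(Q X,Y,Z) = dF'(X,Q Y,Z) = dF'(X,Y,Q Z) and N(Q X,Y,Z) = N(X,Q Y,Z) = N(X,Y,Q Z) for all X,Y,Z ∈ V. -/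
/-- Pointwise model of the lemma: the Q-T-condition for the torsion implies the same
Q-invariance for `dF'` (modeling `dF`) and `N` (modeling `∇^g F`). -/
theorem stmt_8 {V : Type*} [AddCommGroup V] [Module ℝ V]
    (f Q : V →ₗ[ℝ] V) (hcomm : ∀ X : V, Q (f X) = f (Q X))
    (T : V →ₗ[ℝ] V →ₗ[ℝ] V →ₗ[ℝ] ℝ) (dF' N : V → V → V → ℝ)
    (hskew : ∀ X Y Z : V, T X Y Z = - T Y X Z)
    (hdF : ∀ X Y Z : V, dF' X Y Z = - T X Y Z - T Y Z X - T Z X Y)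
    (hN : ∀ X Y Z : V, 2 * N X Y Z =
      - T Z X Y - T X Y Z - T (f Z) X (f Y) - T X (f Y) (f Z)
      + T Y (f Z) (f X) + T (f Y) Z (f X))
    (hQT : ∀ X Y Z : V, T (Q X) Y Z = T X (Q Y) Z ∧ T X (Q Y) Z = T X Y (Q Z)) :
    ∀ X Y Z : V,
      (dF' (Q X) Y Z = dF' X (Q Y) Z ∧ dF' X (Q Y) Z = dF' X Y (Q Z)) ∧
      (N (Q X) Y Z = N X (Q Y) Z ∧ N X (Q Y) Z = N X Y (Q Z)) := by
  have h1 : ∀ X Y Z : V, T (Q X) Y Z = T X (Q Y) Z := fun X Y Z => (hQT X Y Z).1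
  have h2 : ∀ X Y Z : V, T X (Q Y) Z = T X Y (Q Z) := fun X Y Z => (hQT X Y Z).2
  intro X Y Z
  refine ⟨⟨?_, ?_⟩, ?_, ?_⟩
  · have e2 : T Y Z (Q X) = T (Q Y) Z X := by rw [← h2 Y Z X, ← h1 Y Z X]
    linarith [hdF (Q X) Y Z, hdF X (Q Y) Z, h1 X Y Z, e2, h2 Z X Y]
  · have e3 : T Z X (Q Y) = T (Q Z) X Y := by rw [← h2 Z X Y, ← h1 Z X Y]
    linarith [hdF X (Q Y) Z, hdF X Y (Q Z), h2 X Y Z, h1 Y Z X, e3]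
  · have e3 : T (f Z) (Q X) (f Y) = T (f Z) X (f (Q Y)) := by
      rw [h2 (f Z) X (f Y), hcomm]
    have e4 : T (Q X) (f Y) (f Z) = T X (f (Q Y)) (f Z) := by
      rw [h1 X (f Y) (f Z), hcomm]
    have e5 : T Y (f Z) (f (Q X)) = T (Q Y) (f Z) (f X) := by
      rw [← hcomm X, ← h2 Y (f Z) (f X), ← h1 Y (f Z) (f X)]
    have e6 : T (f Y) Z (f (Q X)) = T (f (Q Y)) Z (f X) := by
      rw [← hcomm X, ← h2 (f Y) Z (f X), ← h1 (f Y) Z (f X), hcomm]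
    linarith [hN (Q X) Y Z, hN X (Q Y) Z, h2 Z X Y, h1 X Y Z, e3, e4, e5, e6]
  · have g1 : T (Q Z) X Y = T Z X (Q Y) := (h1 Z X Y).trans (h2 Z X Y)
    have g3 : T (f Z) X (f (Q Y)) = T (f (Q Z)) X (f Y) := by
      rw [← hcomm Y, ← h2 (f Z) X (f Y), ← h1 (f Z) X (f Y), hcomm]
    have g4 : T X (f (Q Y)) (f Z) = T X (f Y) (f (Q Z)) := by
      rw [← hcomm Y, h2 X (f Y) (f Z), hcomm]
    have g5 : T (Q Y) (f Z) (f X) = T Y (f (Q Z)) (f X) := by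
      rw [h1 Y (f Z) (f X), hcomm]
    have g6 : T (f (Q Y)) Z (f X) = T (f Y) (Q Z) (f X) := by
      rw [← hcomm Y, h1 (f Y) Z (f X)]
    linarith [hN X (Q Y) Z, hN X Y (Q Z), g1, h2 X Y Z, g3, g4, g5, g6]
end

section
/- Let V be a real vector space, g : V → V → ℝ a symmetric bilinear form, f : V → V a linear endomorphism skew-adjoint with respect to g, ξ ∈ V with g(ξ,ξ) = 1 and f ξ = 0; set η(X) = g(X,ξ) and Q X = −f(f X) + η(X)·ξ. Let T : V → V → V → ℝ be a trilinear form skew-symmetric in its first two arguments satisfying T(Q X,Y,Z) = T(X,Q Y,Z) = T(X,Y,Q Z) for all X,Y,Z. Define dF'(X,Y,Z) = −T(X,Y,Z) − T(Y,Z,X) − T(Z,X,Y) and 2·N(X,Y,Z) = −T(Z,X,Y) − T(X,Y,Z) − T(f Z,X,f Y) − T(X,f Y,f Z) + T(Y,f Z,f X) + T(f Y,Z,f X). Then for all X,Y,Z ∈ V: T(f Y, f Z, (I+Q)X) = −T(Y, Z, (Q+Q²)X) + η(Z)·T(Y, ξ, (I+Q)X) + η(Y)·[T(f²Z, X, ξ)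 + T(X, ξ, f²Z) − T(ξ, f Z, f X)] − 2·N(X, Y, f²Z) + 2·N(X, f Y, f Z) + dF'(Y, f²Z, (I+Q)X) − dF'(f Y, f Z, (I+Q)X), where I is the identity and f² = f ∘ f, Q² = Q ∘ Q. -/
set_option maxHeartbeats 2000000


/-- Pointwise model of the first identity of the key lemma for Einstein connections on
weak almost contact metric manifolds. -/
theorem stmt_9 {V : Type*} [AddCommGroup V] [Module ℝ V]
    (g : V →ₗ[ℝ] V →ₗ[ℝ] ℝ) (f : V →ₗ[ℝ] V) (ξ : V) (η : V → ℝ) (Q : V → V)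
    (hgsymm : ∀ X Y : V, g X Y = g Y X)
    (hfskew : ∀ X Y : V, g (f X) Y = - g X (f Y))
    (hξ : g ξ ξ = 1) (hfξ : f ξ = 0)
    (hη : ∀ X : V, η X = g X ξ)
    (hQ : ∀ X : V, Q X = - f (f X) + η X • ξ)
    (T : V →ₗ[ℝ] V →ₗ[ℝ] V →ₗ[ℝ] ℝ) (dF' N : V → V → V → ℝ)
    (hskew : ∀ X Y Z : V, T X Y Z = - T Y X Z)
    (hQT : ∀ X Y Z : V, T (Q X) Y Z = T X (Q Y) Z ∧ T X (Q Y) Z = T X Y (Q Z))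
    (hdF : ∀ X Y Z : V, dF' X Y Z = - T X Y Z - T Y Z X - T Z X Y)
    (hN : ∀ X Y Z : V, 2 * N X Y Z =
      - T Z X Y - T X Y Z - T (f Z) X (f Y) - T X (f Y) (f Z)
      + T Y (f Z) (f X) + T (f Y) Z (f X)) :
    ∀ X Y Z : V,
      T (f Y) (f Z) (X + Q X) =
        - T Y Z (Q X + Q (Q X))
        + η Z * T Y ξ (X + Q X)
        + η Y * (T (f (f Z)) X ξ + T X ξ (f (f Z)) - T ξ (f Z) (f X))
        - 2 * N X Y (f (f Z))
        + 2 * N X (f Y) (f Z)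
        + dF' Y (f (f Z)) (X + Q X)
        - dF' (f Y) (f Z) (X + Q X) := by
  intro X Y Z
  -- L1 : move f² from the first slot to the second
  have L1 : ∀ A B C : V, T (f (f A)) B C
      = T A (f (f B)) C + η A * T ξ B C - η B * T A ξ C := by
    intro A B C
    have h := (hQT A B C).1
    rw [hQ A, hQ B] at h
    simp only [map_add, map_neg, map_smul, LinearMap.add_apply, LinearMap.neg_apply,
      LinearMap.smul_apply, smul_eq_mul] at h
    linarith
  -- L2 : move f² from the second slot to the third
  have L2 : ∀ A B C : V, T A (f (f B)) C
      = T A B (f (f C)) + η B * T A ξ C - η C * T A B ξ := by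
    intro A B C
    have h := (hQT A B C).2
    rw [hQ B, hQ C] at h
    simp only [map_add, map_neg, map_smul, LinearMap.add_apply, LinearMap.neg_apply,
      LinearMap.smul_apply, smul_eq_mul] at h
    linarith
  have hηξ : η ξ = 1 := by rw [hη, hξ]
  -- LX : middle slot ξ, f² in third slot
  have LX : ∀ A C : V, T A ξ (f (f C)) = - T A ξ C + η C * T A ξ ξ := by
    intro A C
    have h := (hQT A ξ C).2
    rw [hQ ξ, hQ C, hfξ, hηξ] at h
    simp only [map_zero, map_add, map_neg, map_smul, LinearMap.add_apply, LinearMap.neg_apply,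
      LinearMap.smul_apply, LinearMap.zero_apply, smul_eq_mul, neg_zero, zero_add, one_mul] at h
    linarith
  -- explicit forms of Q X and Q (Q X)
  have hQX : Q X = - f (f X) + η X • ξ := hQ X
  have hηQX : η (Q X) = η X := by
    rw [hQX, hη, hη]
    simp only [map_add, map_neg, LinearMap.add_apply, LinearMap.neg_apply, map_smul,
      LinearMap.smul_apply, smul_eq_mul, hfskew, hfξ, map_zero, LinearMap.zero_apply, hξ]
    ring
  have hQQX : Q (Q X) = f (f (f (f X))) + η X • ξ := by
    rw [hQ (Q X), hηQX, hQX]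
    simp [hfξ]
  have hηf : ∀ W : V, η (f W) = 0 := by
    intro W
    rw [hη, hfskew, hfξ]
    simp
  have hA : T Y Z (f (f ξ)) = 0 := by simp [hfξ]
  have hB : T Z (f (f ξ)) Y = 0 := by simp [hfξ]
  rw [hN X Y (f (f Z)), hN X (f Y) (f Z), hdF Y (f (f Z)) (X + Q X),
    hdF (f Y) (f Z) (X + Q X), hQQX, hQX]
  simp only [map_add, map_neg, map_smul, LinearMap.add_apply, LinearMap.neg_apply,
    LinearMap.smul_apply, smul_eq_mul]
  linear_combination
    (- η Y) * L1 Z X ξ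
    - L1 (f Z) X (f Y)
    + L1 Z X (f (f Y))
    - L1 Y (f Z) (f X)
    + L2 Y Z X
    - L2 Y Z (f (f X))
    + η X * L2 Y Z ξ
    - L1 Z (f (f X)) Y
    + η X * L1 Z ξ Y
    - L1 X Y (f (f Z))
    + L1 X (f Y) (f Z)
    - L2 Z (f (f X)) Y
    + (- η Z) * L2 ξ X Y
    + L2 X (f Y) (f Z)
    + (- η X) * LX Z Y
    + (- η X * T Y Z ξ - η X * T Z ξ Y) * hηξ
    + η X * hA + η X * hB
    + T Y Z ξ * hηf (f X)
    + (- T X (f Y) ξ - T ξ X (f Y) + T Y ξ (f X)) * hηf Z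
end

section
/- Let V be a real vector space, g : V → V → ℝ a symmetric bilinear form, f : V → V a linear endomorphism skew-adjoint with respect to g, ξ ∈ V with g(ξ,ξ) = 1, η(X) = g(X,ξ), f ξ = 0, and f(f X) = −X + η(X)·ξ for all X ∈ V (almost contact metric structure). For a real number λ > 0 define f' = λ·f, g'(X,Y) = λ⁻¹·g(X,Y) + (1 − λ⁻¹)·η(X)·η(Y), and Q X = λ²·X + (1 − λ²)·η(X)·ξ. Then: g' is a symmetric bilinear form with g'(ξ,ξ) = 1 and g'(X,ξ) = η(X) for all X; f' is skew-adjoint with respect to g'; f' ξ = 0; Q is self-adjoint with respect to g'; Q X = −f'(f'X) + η(X)·ξ for all X; and g'(f'X, f'Y) = g'(X, Q Y) − η(X)·η(Y) for all X,Y ∈ V. In other words, (f', Q, ξ, η, g') satisfies all the defining identities of a weak almost contact metric structure. -/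
/-- Pointwise model of the deformation construction producing weak almost contact metric
structures from almost contact metric ones: for `λ > 0` (here `l`), the data
`f' = λ·f`, `g' = λ⁻¹·g + (1 − λ⁻¹)·η⊗η`, `Q = λ²·I + (1 − λ²)·η⊗ξ` satisfies all the
defining identities of a weak almost contact metric structure. -/
theorem stmt_19 {V : Type*} [AddCommGroup V] [Module ℝ V]
    (g : V →ₗ[ℝ] V →ₗ[ℝ] ℝ) (f : V →ₗ[ℝ] V) (ξ : V) (η : V → ℝ)
    (hgsymm : ∀ X Y : V, g X Y = g Y X)
    (hfskew : ∀ X Y : V, g (f X) Y = - g X (f Y))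
    (hξ : g ξ ξ = 1)
    (hη : ∀ X : V, η X = g X ξ)
    (hfξ : f ξ = 0)
    (hf2 : ∀ X : V, f (f X) = - X + η X • ξ)
    (l : ℝ) (hl : 0 < l)
    (f' : V → V) (g' : V → V → ℝ) (Q : V → V)
    (hf' : ∀ X : V, f' X = l • f X)
    (hg' : ∀ X Y : V, g' X Y = l⁻¹ * g X Y + (1 - l⁻¹) * η X * η Y)
    (hQdef : ∀ X : V, Q X = (l ^ 2) • X + ((1 - l ^ 2) * η X) • ξ) :
    (∀ X Y : V, g' X Y = g' Y X) ∧
    (∀ (a : ℝ) (X₁ X₂ Y : V), g' (a • X₁ + X₂) Y = a * g' X₁ Y + g' X₂ Y) ∧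
    (∀ (a : ℝ) (X Y₁ Y₂ : V), g' X (a • Y₁ + Y₂) = a * g' X Y₁ + g' X Y₂) ∧
    (g' ξ ξ = 1) ∧
    (∀ X : V, g' X ξ = η X) ∧
    (∀ X Y : V, g' (f' X) Y = - g' X (f' Y)) ∧
    (f' ξ = 0) ∧
    (∀ X Y : V, g' (Q X) Y = g' X (Q Y)) ∧
    (∀ X : V, Q X = - f' (f' X) + η X • ξ) ∧
    (∀ X Y : V, g' (f' X) (f' Y) = g' X (Q Y) - η X * η Y) := by
  have hl0 : l ≠ 0 := ne_of_gt hl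
  have hηξ : η ξ = 1 := by rw [hη, hξ]
  have hgfξ : ∀ X : V, g (f X) ξ = 0 := by
    intro X; rw [hfskew, hfξ, map_zero, neg_zero]
  have hgξf : ∀ X : V, g ξ (f X) = 0 := by
    intro X; rw [hgsymm, hgfξ]
  have hgff : ∀ X Y : V, g (f X) (f Y) = g X Y - g X ξ * g Y ξ := by
    intro X Y
    rw [hfskew, hf2, map_add, map_neg, map_smul, hη Y, smul_eq_mul]
    ring
  refine ⟨?_, ?_, ?_, ?_, ?_, ?_, ?_, ?_, ?_, ?_⟩
  · intro X Y; rw [hg', hg', hgsymm]; ring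
  · intro a X₁ X₂ Y
    simp only [hg', hη, map_add, map_smul, LinearMap.add_apply, LinearMap.smul_apply,
      smul_eq_mul]
    ring
  · intro a X Y₁ Y₂
    simp only [hg', hη, map_add, map_smul, LinearMap.add_apply, LinearMap.smul_apply,
      smul_eq_mul]
    ring
  · rw [hg', hξ, hηξ]; ring
  · intro X; rw [hg', hηξ, hη]; ring
  · intro X Y
    simp only [hg', hf', hη, map_smul, LinearMap.smul_apply, smul_eq_mul, hgfξ, hgξf,
      hfskew X Y, hgsymm ξ]
    ring
  · rw [hf', hfξ, smul_zero]
  · intro X Y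
    simp only [hQdef, hg', hη, map_add, map_smul, LinearMap.add_apply, LinearMap.smul_apply,
      smul_eq_mul, hξ, hgsymm ξ]
    ring
  · intro X
    rw [hQdef, hf', hf', map_smul, smul_smul, hf2]
    module
  · intro X Y
    simp only [hg', hf', hQdef, hη, map_add, map_smul, LinearMap.add_apply,
      LinearMap.smul_apply, smul_eq_mul, hgff, hgfξ, hξ, hgsymm ξ]
    field_simp
    ring
end
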